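/- In the relaxed market-clearing LP where the loss constraint is relaxed to p^loss ≥ α f⁺ + β with f = f⁺ − f⁻, f⁺, f⁻ ≥ 0, and losses enter the nodal balance with coefficient +1 (adding to demand), if at an optimal solution the dual multiplier (LMP) of every balance constraint is strictly positive, then the relaxed inequality is tight: p^loss = α(f⁺ + f⁻) + β, and f⁺ · f⁻ = 0. -/
import Mathlib


/-- Exactness of the relaxed loss formulation under positive LMPs, on a
two-zone market with one HVDC line with linear loss model (losses split half
to each zone's balance).  If a feasible point is optimal and admits KKT
multipliers (dual feasibility, stationarity, complementary slackness) in which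
the dual multiplier (LMP) of every balance constraint is strictly positive,
then the relaxed loss inequality is tight and `f⁺ · f⁻ = 0`. -/
theorem relaxed_losses_exact_under_positive_LMPs
    (c₁ c₂ D₁ D₂ α β G₁min G₁max G₂min G₂max : ℝ) (hα : 0 < α)
    -- primal point
    (g₁ g₂ fp fm ploss : ℝ)
    -- primal feasibility
    (hfp : 0 ≤ fp) (hfm : 0 ≤ fm)
    (hloss : α * (fp + fm) + β ≤ ploss)
    (hg₁ : G₁min ≤ g₁ ∧ g₁ ≤ G₁max) (hg₂ : G₂min ≤ g₂ ∧ g₂ ≤ G₂max)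
    (hbal₁ : D₁ - g₁ + (fp - fm) + ploss / 2 = 0)
    (hbal₂ : D₂ - g₂ - (fp - fm) + ploss / 2 = 0)
    -- optimality of the primal point
    (hopt : ∀ g₁' g₂' fp' fm' ploss' : ℝ,
      0 ≤ fp' → 0 ≤ fm' → α * (fp' + fm') + β ≤ ploss' →
      G₁min ≤ g₁' → g₁' ≤ G₁max → G₂min ≤ g₂' → g₂' ≤ G₂max →
      D₁ - g₁' + (fp' - fm') + ploss' / 2 = 0 →
      D₂ - g₂' - (fp' - fm') + ploss' / 2 = 0 →
      c₁ * g₁ + c₂ * g₂ ≤ c₁ * g₁' + c₂ * g₂')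
    -- KKT multipliers with strictly positive LMPs
    (lam₁ lam₂ mu sigp sigm : ℝ)
    (hlam₁ : 0 < lam₁) (hlam₂ : 0 < lam₂)
    (hmu : 0 ≤ mu) (hsigp : 0 ≤ sigp) (hsigm : 0 ≤ sigm)
    -- stationarity with respect to fp, fm and ploss
    (hstat_fp : lam₁ - lam₂ + mu * α - sigp = 0)
    (hstat_fm : -lam₁ + lam₂ + mu * α - sigm = 0)
    (hstat_ploss : (lam₁ + lam₂) / 2 - mu = 0)
    -- complementary slackness
    (hcs_loss : mu * (ploss - (α * (fp + fm) + β)) = 0)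
    (hcs_fp : sigp * fp = 0) (hcs_fm : sigm * fm = 0) :
    ploss = α * (fp + fm) + β ∧ fp * fm = 0 := by
  have hmupos : 0 < mu := by nlinarith
  constructor
  · have := hcs_loss
    nlinarith
  · have hsum : sigp + sigm = 2 * mu * α := by linarith
    have : 0 < sigp + sigm := by nlinarith
    rcases lt_or_ge 0 sigp with h | h
    · have hfp0 : fp = 0 := by
        rcases mul_eq_zero.mp hcs_fp with h' | h'
        · exact absurd h' (ne_of_gt h)
        · exact h'
      simp [hfp0]
    · have hsigm : 0 < sigm := by linarith
      have hfm0 : fm = 0 := by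
        rcases mul_eq_zero.mp hcs_fm with h' | h'
        · exact absurd h' (ne_of_gt hsigm)
        · exact h'
      simp [hfm0]
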